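/- arXiv:1801.02037 — 8 statements merged into one kernel-verified Lean document; each statement's English description precedes it below -/
import Mathlib

section
/- For every ε > 0 there exists n₀ ∈ ℕ such that for every integer n ≥ n₀ there exist a natural number t with t ≤ (1+ε)·2n/log₂ n and bit strings x⁽¹⁾, …, x⁽ᵗ⁾ ∈ {0,1}^n with the following property: for every two distinct strings y, z ∈ {0,1}^n there is an index i ∈ {1, …, t} with OM_z(x⁽ⁱ⁾) ≠ OM_y(x⁽ⁱ⁾); equivalently, the map z ↦ (OM_z(x⁽¹⁾), …, OM_z(x⁽ᵗ⁾)) is injective on {0,1}^n. -/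
/-- The (generalized) OneMax function: `OM z x` is the number of positions in
which `x` and the target string `z` agree. -/
def OM {n : ℕ} (z x : Fin n → Bool) : ℕ :=
  (Finset.univ.filter fun i => x i = z i).card

/-!
View `z ∈ {0,1}^n` as coins and a query string `x` as a weighing: since
`OM_z(x) + |x| + |z| = n + 2⟨x, z⟩`, the all-ones query reveals `|z|` and then every further
query `x` reveals the inner product `⟨x, z⟩`. So it suffices to find few 0/1 rows whose inner
products with `z` determine `z` (a detecting matrix). The Cantor–Mills doubling gives such a
matrix with `2^(k+1) - 1` rows and `k 2^k + 1` columns. Cutting `{1, …, n}` into blocks of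
`k 2^k + 1` coordinates and using this matrix on every block costs about `2n/k + 2^(k+1)` queries,
and `k ≈ log₂ n - log₂ log₂ n - O(1)` makes this `(1 + o(1)) 2n / log₂ n`.
-/

open Finset Filter Real

lemma card_filter_sum {α β : Type*} [Fintype α] [Fintype β] (p : α ⊕ β → Prop)
    [DecidablePred p] : #{x | p x} = #{a | p (.inl a)} + #{b | p (.inr b)} := by
  simp only [card_filter, Fintype.sum_sum_type]

namespace CoinWeighing

section
variable {R C : Type*} [Fintype C]

/-- The 0/1 matrix–vector product `M z`: row `r` weighs the coins `z c` with `M r c`. -/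
def weigh (M : R → C → Bool) (z : C → Bool) (r : R) : ℕ := #{c | M r c ∧ z c}

def IsDetecting (M : R → C → Bool) : Prop := Function.Injective (weigh M)

lemma weigh_add_weigh_not (M : R → C → Bool) (v : C → Bool) (r : R) :
    weigh M v r + weigh (fun r c => !M r c) v r = #{c | v c} := by
  rw [← card_filter_add_card_filter_not (s := {c | v c}) fun c => M r c]
  simp [weigh, filter_filter, and_comm]

def blockDiagonal {ι β : Type*} [DecidableEq β] (M : R → C → Bool) (f : ι → β × C) :
    β × R → ι → Bool :=
  fun p i => decide ((f i).1 = p.1) && M p.2 (f i).2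

lemma weigh_blockDiagonal {ι β : Type*} [Fintype ι] [DecidableEq β] (M : R → C → Bool)
    {f : ι → β × C} (hf : f.Injective) (z : ι → Bool) (b : β) (r : R) :
    weigh (blockDiagonal M f) z (b, r) =
      weigh M (fun c => f.extend z (fun _ => false) (b, c)) r := by
  refine card_bij (fun i _ => (f i).2) ?_ ?_ ?_
  · intro i hi
    simp only [blockDiagonal, mem_filter, mem_univ, true_and, Bool.and_eq_true,
      decide_eq_true_eq] at hi ⊢
    rw [← hi.1.1, Prod.mk.eta, hf.extend_apply]
    exact ⟨hi.1.2, hi.2⟩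
  · intro i hi j hj hij
    simp only [blockDiagonal, mem_filter, mem_univ, true_and, Bool.and_eq_true,
      decide_eq_true_eq] at hi hj
    exact hf (Prod.ext (hi.1.1.trans hj.1.1.symm) hij)
  · intro c hc
    simp only [mem_filter, mem_univ, true_and] at hc
    obtain ⟨i, hi⟩ : ∃ i, f i = (b, c) := by
      by_contra hne
      simp [Function.extend_apply' _ _ _ hne] at hc
    rw [← hi, hf.extend_apply] at hc
    refine ⟨i, ?_, by rw [hi]⟩
    simp [blockDiagonal, hi, hc]

theorem IsDetecting.blockDiagonal {ι β : Type*} [Fintype ι] [DecidableEq β]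
    {M : R → C → Bool} (hM : IsDetecting M) {f : ι → β × C} (hf : f.Injective) :
    IsDetecting (blockDiagonal M f) := by
  intro z z' h
  have hblock (b : β) : (fun c => f.extend z (fun _ => false) (b, c)) =
      fun c => f.extend z' (fun _ => false) (b, c) :=
    hM <| funext fun r => by
      rw [← weigh_blockDiagonal M hf, ← weigh_blockDiagonal M hf]
      exact congrFun h (b, r)
  funext i
  simpa [hf.extend_apply] using congrFun (hblock (f i).1) (f i).2

end

section Doubling
variable {R C : Type*} [Fintype R] [Fintype C] [DecidableEq R]

/-- The Cantor–Mills doubling: on columns `(u, v, w)` the rows weigh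
`M u + M v + w`, `M u + (¬M) v` and `|v|`. -/
def double (M : R → C → Bool) : (R ⊕ R) ⊕ Unit → (C ⊕ C) ⊕ R → Bool
  | .inl (.inl r), .inl (.inl c) => M r c
  | .inl (.inl r), .inl (.inr c) => M r c
  | .inl (.inl r), .inr r' => decide (r = r')
  | .inl (.inr r), .inl (.inl c) => M r c
  | .inl (.inr r), .inl (.inr c) => !M r c
  | .inl (.inr _), .inr _ => false
  | .inr _, .inl (.inl _) => false
  | .inr _, .inl (.inr _) => true
  | .inr _, .inr _ => false

variable (M : R → C → Bool) (z : (C ⊕ C) ⊕ R → Bool)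

lemma weigh_double_inl_inl (r : R) :
    weigh (double M) z (.inl (.inl r)) =
      weigh M (z ∘ .inl ∘ .inl) r + weigh M (z ∘ .inl ∘ .inr) r + (z (.inr r)).toNat := by
  rw [weigh, card_filter_sum, card_filter_sum]
  congr 1
  cases h : z (.inr r)
  · simp [double, h]
  · rw [Bool.toNat_true, card_eq_one]
    refine ⟨r, ?_⟩
    ext r'
    simp only [double, decide_eq_true_eq, mem_filter, mem_univ, true_and, mem_singleton]
    exact ⟨fun h' => h'.1.symm, by rintro rfl; exact ⟨rfl, h⟩⟩

lemma weigh_double_inl_inr (r : R) :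
    weigh (double M) z (.inl (.inr r)) =
      weigh M (z ∘ .inl ∘ .inl) r + weigh (fun r c => !M r c) (z ∘ .inl ∘ .inr) r := by
  rw [weigh, card_filter_sum, card_filter_sum]
  simp only [double, Bool.false_eq_true, false_and, filter_false, card_empty, add_zero]
  rfl

lemma weigh_double_inr :
    weigh (double M) z (.inr ()) = #{c | (z ∘ .inl ∘ .inr) c} := by
  rw [weigh, card_filter_sum, card_filter_sum]
  simp [double]

variable {M}

/-- The third row gives `|v|`; the sum of the first two is then `2 (M u)_r + |v| + w_r`, whose
parity gives `w_r` and whose half gives `M u`, hence `u`; finally the first row gives `M v`. -/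
theorem isDetecting_double (hM : IsDetecting M) : IsDetecting (double M) := by
  intro z z' h
  have hrow (i) : weigh (double M) z i = weigh (double M) z' i := congrFun h i
  have hcard : #{c | (z ∘ .inl ∘ .inr) c} = #{c | (z' ∘ .inl ∘ .inr) c} := by
    simpa only [weigh_double_inr] using hrow (.inr ())
  have key (r : R) :
      weigh M (z ∘ .inl ∘ .inl) r = weigh M (z' ∘ .inl ∘ .inl) r ∧ z (.inr r) = z' (.inr r) := by
    have htop := hrow (.inl (.inl r))
    have hbot := hrow (.inl (.inr r))
    rw [weigh_double_inl_inl, weigh_double_inl_inl] at htop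
    rw [weigh_double_inl_inr, weigh_double_inl_inr] at hbot
    have := weigh_add_weigh_not M (z ∘ .inl ∘ .inr) r
    have := weigh_add_weigh_not M (z' ∘ .inl ∘ .inr) r
    rcases hw : z (.inr r) <;> rcases hw' : z' (.inr r) <;>
      simp only [hw, hw', Bool.toNat_true, Bool.toNat_false] at htop <;>
      first | exact ⟨by omega, rfl⟩ | omega
  have hu : z ∘ .inl ∘ .inl = z' ∘ .inl ∘ .inl := hM (funext fun r => (key r).1)
  have hv : z ∘ .inl ∘ .inr = z' ∘ .inl ∘ .inr := hM <| funext fun r => by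
    have htop := hrow (.inl (.inl r))
    rw [weigh_double_inl_inl, weigh_double_inl_inl, (key r).2, hu] at htop
    omega
  funext x
  rcases x with (c | c) | r
  · exact congrFun hu c
  · exact congrFun hv c
  · exact (key r).2

end Doubling

lemma isDetecting_unit : IsDetecting fun (_ : Unit) (_ : Unit) => true := by
  intro z z' h
  have h := congrFun h ()
  funext u
  cases hz : z u <;> cases hz' : z' u <;> simp_all [weigh]

theorem exists_isDetecting (k : ℕ) :
    ∃ (R C : Type) (_ : Fintype R) (_ : Fintype C) (M : R → C → Bool),
      IsDetecting M ∧ Fintype.card R + 1 = 2 ^ (k + 1) ∧ Fintype.card C = k * 2 ^ k + 1 := by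
  induction k with
  | zero => exact ⟨Unit, Unit, inferInstance, inferInstance, _, isDetecting_unit, rfl, rfl⟩
  | succ k ih =>
    obtain ⟨R, C, _, _, M, hM, hR, hC⟩ := ih
    classical
    refine ⟨(R ⊕ R) ⊕ Unit, (C ⊕ C) ⊕ R, inferInstance, inferInstance, double M,
      isDetecting_double hM, ?_, ?_⟩
    · simp only [Fintype.card_sum, Fintype.card_unit, pow_succ] at hR ⊢
      omega
    · simp only [Fintype.card_sum, hC, pow_succ] at hR ⊢
      nlinarith

end CoinWeighing

open CoinWeighing

lemma OM_add_card {n : ℕ} (z x : Fin n → Bool) :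
    OM z x + #{i | x i} + #{i | z i} = n + 2 * #{i | x i ∧ z i} := by
  simp only [OM, card_filter, ← sum_add_distrib, mul_sum]
  calc _ = ∑ i : Fin n, (1 + 2 * if x i ∧ z i then 1 else 0) :=
        sum_congr rfl fun i _ => by cases x i <;> cases z i <;> rfl
    _ = _ := by
      rw [sum_add_distrib, sum_const, card_univ, Fintype.card_fin, smul_eq_mul, mul_one]

lemma OM_const_true {n : ℕ} (z : Fin n → Bool) : OM z (fun _ => true) = #{i | z i} := by
  simp [OM, @eq_comm _ true]

theorem CoinWeighing.IsDetecting.injective_OM {n : ℕ} {Q : Type*} {x : Q → Fin n → Bool}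
    (hx : IsDetecting x) :
    Function.Injective fun z (q : Option Q) => OM z (q.elim (fun _ => true) x) := by
  intro z z' h
  have hcard : #{i | z i} = #{i | z' i} := by
    simpa only [Option.elim_none, OM_const_true] using congrFun h none
  refine hx (funext fun q => ?_)
  have hq : OM z (x q) = OM z' (x q) := congrFun h (some q)
  have := OM_add_card z (x q)
  have := OM_add_card z' (x q)
  simp only [weigh]
  omega

lemma cast_div_add_one_mul_add_one_le {n k r c : ℕ} (hk : 0 < k) (hr : r + 1 = 2 ^ (k + 1))
    (hc : c = k * 2 ^ k + 1) :
    (((n / c + 1) * r + 1 : ℕ) : ℝ) ≤ 2 * n / k + 2 ^ (k + 1) := by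
  have hr' : (r : ℝ) + 1 = 2 ^ (k + 1) := by exact_mod_cast hr
  have hdiv : ((n / c : ℕ) : ℝ) ≤ n / (k * 2 ^ k) :=
    Nat.cast_div_le.trans <| div_le_div_of_nonneg_left (by positivity) (by positivity)
      (by rw [hc]; push_cast; linarith)
  calc (((n / c + 1) * r + 1 : ℕ) : ℝ) = (n / c : ℕ) * r + (r + 1) := by push_cast; ring
    _ ≤ n / (k * 2 ^ k) * 2 ^ (k + 1) + 2 ^ (k + 1) := by rw [hr']; gcongr; linarith
    _ = 2 * n / k + 2 ^ (k + 1) := by field_simp; ring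

theorem exists_injective_OM_queries (n k : ℕ) (hk : 0 < k) :
    ∃ (t : ℕ) (x : Fin t → Fin n → Bool), (t : ℝ) ≤ 2 * n / k + 2 ^ (k + 1) ∧
      Function.Injective fun z i => OM z (x i) := by
  obtain ⟨R, C, _, _, M, hM, hR, hC⟩ := exists_isDetecting k
  obtain ⟨f⟩ : Nonempty (Fin n ↪ Fin (n / Fintype.card C + 1) × C) := by
    refine Function.Embedding.nonempty_of_card_le ?_
    simpa [Fintype.card_prod, mul_comm] using
      (Nat.lt_mul_div_succ n (hC ▸ Nat.succ_pos _ : 0 < Fintype.card C)).le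
  let e := Fintype.equivFin (Option (Fin (n / Fintype.card C + 1) × R))
  refine ⟨_, fun i => (e.symm i).elim (fun _ => true) (blockDiagonal M f), ?_,
    e.symm.surjective.injective_comp_right.comp (hM.blockDiagonal f.injective).injective_OM⟩
  simpa [Fintype.card_prod] using cast_div_add_one_mul_add_one_le (n := n) hk hR hC

lemma eventually_logb_add_le_mul (a : ℝ) {δ : ℝ} (hδ : 0 < δ) :
    ∀ᶠ ℓ : ℝ in atTop, logb 2 ℓ + a ≤ δ * ℓ := by
  have h := ((isLittleO_logb_id_atTop (b := 2)).add
    (Asymptotics.isLittleO_const_id_atTop a)).bound hδ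
  filter_upwards [h, eventually_ge_atTop 0] with ℓ hℓ hℓ0
  rw [Real.norm_eq_abs, Real.norm_eq_abs, id, abs_of_nonneg hℓ0] at hℓ
  exact (le_abs_self _).trans hℓ

lemma exists_nat_ge_and_two_pow_le {ℓ a δ : ℝ} (hℓ : 0 < ℓ) (hδ : δ < 1)
    (h : logb 2 ℓ - a + 1 ≤ δ * ℓ) :
    ∃ k : ℕ, (1 - δ) * ℓ ≤ k ∧ (2 : ℝ) ^ k ≤ 2 ^ (ℓ + a) / ℓ := by
  have hpos : 0 ≤ ℓ + a - logb 2 ℓ := by nlinarith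
  refine ⟨⌊ℓ + a - logb 2 ℓ⌋₊, by linarith [Nat.sub_one_lt_floor (ℓ + a - logb 2 ℓ)], ?_⟩
  calc (2 : ℝ) ^ ⌊ℓ + a - logb 2 ℓ⌋₊ = 2 ^ (⌊ℓ + a - logb 2 ℓ⌋₊ : ℝ) := (rpow_natCast _ _).symm
    _ ≤ 2 ^ (ℓ + a - logb 2 ℓ) := rpow_le_rpow_of_exponent_le one_le_two (Nat.floor_le hpos)
    _ = 2 ^ (ℓ + a) / ℓ := by rw [rpow_sub two_pos, rpow_logb two_pos (by norm_num) hℓ]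

/-- With `ℓ = log₂ n` take `k ≈ ℓ - log₂ ℓ + log₂ (ε/2)`: then `2^(k+1) ≤ εn/ℓ`, while
`k ≥ 2ℓ/(2+ε)` because `log₂ ℓ = o(ℓ)`. -/
lemma eventually_exists_two_mul_div_add_two_pow_le {ε : ℝ} (hε : 0 < ε) :
    ∀ᶠ n : ℕ in atTop, ∃ k : ℕ, 0 < k ∧
      2 * n / k + 2 ^ (k + 1) ≤ (1 + ε) * (2 * n) / logb 2 n := by
  have hδ : 0 < ε / (2 + ε) := by positivity
  have hδ1 : ε / (2 + ε) < 1 := (div_lt_one (by positivity)).2 (by linarith)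
  have hℓ : Tendsto (fun n : ℕ => logb 2 n) atTop atTop :=
    (tendsto_logb_atTop one_lt_two).comp tendsto_natCast_atTop_atTop
  filter_upwards [hℓ.eventually (eventually_logb_add_le_mul (1 - logb 2 (ε / 2)) hδ),
    hℓ.eventually (eventually_gt_atTop 0), eventually_gt_atTop 0] with n hsmall hℓpos hn
  set ℓ := logb 2 n
  obtain ⟨k, hk, hpow⟩ :=
    exists_nat_ge_and_two_pow_le (a := logb 2 (ε / 2)) hℓpos hδ1 (by linarith)
  have hn' : (0 : ℝ) < n := by exact_mod_cast hn
  have h2ℓ : (2 : ℝ) ^ (ℓ + logb 2 (ε / 2)) = ε / 2 * n := by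
    rw [rpow_add two_pos, rpow_logb two_pos (by norm_num) hn',
      rpow_logb two_pos (by norm_num) (by positivity), mul_comm]
  have h1δ : 1 - ε / (2 + ε) = 2 / (2 + ε) := by field_simp; ring
  have hk0 : (0 : ℝ) < k := lt_of_lt_of_le (by rw [h1δ]; positivity) hk
  refine ⟨k, by exact_mod_cast hk0, ?_⟩
  calc 2 * n / k + 2 ^ (k + 1) ≤ 2 * n / ((1 - ε / (2 + ε)) * ℓ) + 2 * (ε / 2 * n / ℓ) := by
        rw [pow_succ, mul_comm _ (2 : ℝ), ← h2ℓ]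
        gcongr
    _ = (1 + ε) * (2 * n) / ℓ := by rw [h1δ]; field_simp; ring

/-- Derandomized Erdős–Rényi strategy: for every `ε > 0` and all large enough `n`
there are `t ≤ (1+ε)·2n/log₂ n` bit strings such that the vector of OneMax values
on these strings identifies the target string, i.e. `z ↦ (OM_z(x⁽¹⁾), …, OM_z(x⁽ᵗ⁾))`
is injective. -/
theorem stmt0 :
    ∀ ε : ℝ, 0 < ε → ∃ n₀ : ℕ, ∀ n : ℕ, n₀ ≤ n →
      ∃ (t : ℕ) (x : Fin t → (Fin n → Bool)),
        (t : ℝ) ≤ (1 + ε) * (2 * n) / Real.logb 2 n ∧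
        Function.Injective (fun z : Fin n → Bool => fun i : Fin t => OM z (x i)) := by
  intro ε hε
  obtain ⟨n₀, hn₀⟩ := eventually_atTop.1 (eventually_exists_two_mul_div_add_two_pow_le hε)
  refine ⟨n₀, fun n hn => ?_⟩
  obtain ⟨k, hk, hbound⟩ := hn₀ n hn
  obtain ⟨t, x, ht, hx⟩ := exists_injective_OM_queries n k hk
  exact ⟨t, x, ht.trans hbound, hx⟩
end

section
/- Let k ≥ 2 be an integer, let S be a finite nonempty set, let V be a set with |V| ≤ k, and let (f_s)_{s ∈ S} be any family of functions f_s : S → V. Then for every randomized strategy μ on deterministic strategies q : List V → S there exists s ∈ S with E_{q∼μ}[τ(q, f_s, {s})] ≥ log|S|/log k − 2. -/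
open scoped ENNReal

namespace BBC

variable {S V : Type*}

/-- The history of observed objective values after `t` queries:
`hist q f t = [f x₁, …, f x_t]`, where `x₁ = q []` and
`x_{t+1} = q [f x₁, …, f x_t]`. -/
def hist (q : List V → S) (f : S → V) : ℕ → List V
  | 0 => []
  | t + 1 => hist q f t ++ [f (q (hist q f t))]

/-- `queryPt q f t` is the `(t+1)`-st queried search point `x_{t+1}`. -/
def queryPt (q : List V → S) (f : S → V) (t : ℕ) : S := q (hist q f t)

/-- The hitting time of a deterministic strategy `q` on objective `f` with
target set `M`: the least `t ≥ 1` with `x_t ∈ M`, valued in `ℕ∞`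
(and `⊤` if no query ever hits `M`). -/
noncomputable def hitTime (q : List V → S) (f : S → V) (M : Set S) : ℕ∞ :=
  sInf ((fun k : ℕ => (k : ℕ∞) + 1) '' {k | queryPt q f k ∈ M})

/-- The expected hitting time of a randomized strategy `μ` (a probability mass
function on deterministic strategies) on `(f, M)`, valued in `[0,∞]`. -/
noncomputable def expHitTime (μ : PMF (List V → S)) (f : S → V) (M : Set S) : ℝ≥0∞ :=
  ∑' q, μ q * (hitTime q f M : ℝ≥0∞)

end BBC

/-!
Fix a deterministic strategy `q`. Its `(j+1)`-st query is a function of the `j` values seen so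
far, so it is the target of at most `|V|^j ≤ k^j` of the instances `f s`; hence fewer than `k^m`
instances are solved within `m` queries. Since `τ ≥ #{m ≤ T | m < τ}`, summing over the
instances gives `∑ₛ τₛ ≥ (T+1)|S| - ∑_{m ≤ T} k^m ≥ (T-1)|S|` for `T = ⌊log_k |S|⌋`, the
geometric sum being below `2 k^T ≤ 2|S|`.
This bound is linear in `q`, so it survives averaging over `μ`, and some instance has expected
hitting time at least `T - 1 ≥ log|S| / log k - 2`.
-/

open Finset

namespace BBC

variable {S V : Type*}

lemma length_hist (q : List V → S) (f : S → V) (t : ℕ) : (hist q f t).length = t := by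
  induction t with
  | zero => rfl
  | succ t ih => simp [hist, ih]

lemma lt_hitTime_iff (q : List V → S) (f : S → V) (M : Set S) (m : ℕ) :
    (m : ℕ∞) < hitTime q f M ↔ ∀ j < m, queryPt q f j ∉ M := by
  rw [← ENat.add_one_le_iff (ENat.natCast_ne_top m), hitTime, le_sInf_iff]
  simp only [Set.forall_mem_image, Set.mem_ofPred_eq]
  refine ⟨fun h j hj hM => ?_, fun h j hM => ?_⟩
  · have := h hM
    norm_cast at this
    omega
  · by_contra hlt
    exact h j (by norm_cast at hlt; omega) hM

lemma card_filter_range_lt_le (τ : ℕ∞) (N : ℕ) :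
    (#((range N).filter (fun m : ℕ => (m : ℕ∞) < τ)) : ℕ∞) ≤ τ := by
  induction τ using ENat.recTopCoe with
  | top => exact le_top
  | coe t =>
    have : (range N).filter (fun m : ℕ => (m : ℕ∞) < t) ⊆ range t := fun m hm => by
      simp_all
    exact_mod_cast (card_le_card this).trans (card_range t).le

lemma sum_range_succ_log_pow_le {k : ℕ} (hk : 2 ≤ k) {n : ℕ} (hn : n ≠ 0) :
    ∑ m ∈ range (Nat.log k n + 1), k ^ m ≤ 2 * n := by
  have hlt : ∑ m ∈ range (Nat.log k n), k ^ m < k ^ Nat.log k n :=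
    Nat.geomSum_lt hk fun m hm => mem_range.mp hm
  have hle : k ^ Nat.log k n ≤ n := Nat.pow_log_le_self k hn
  rw [sum_range_succ]
  omega

open scoped Classical

variable [Fintype S] [Fintype V]

lemma card_filter_queryPt_eq_le (q : List V → S) (f : S → S → V) (j : ℕ) :
    #{s | queryPt q (f s) j = s} ≤ Fintype.card V ^ j := by
  rw [← card_vector, ← card_univ]
  refine card_le_card_of_injOn (fun s => ⟨hist q (f s) j, length_hist q (f s) j⟩)
    (fun _ _ => mem_univ _) fun a ha b hb hab => ?_
  simp only [coe_filter, mem_univ, true_and, Set.mem_ofPred_eq] at ha hb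
  have hhist : hist q (f a) j = hist q (f b) j := congrArg Subtype.val hab
  rw [← ha, ← hb, queryPt, queryPt, hhist]

lemma card_filter_hitTime_le_lt {k : ℕ} (hk : 2 ≤ k) (hV : Fintype.card V ≤ k)
    (q : List V → S) (f : S → S → V) (m : ℕ) :
    #{s | hitTime q (f s) {s} ≤ m} < k ^ m := by
  have hsub : ({s | hitTime q (f s) {s} ≤ m} : Finset S)
      ⊆ (range m).biUnion fun j => {s | queryPt q (f s) j = s} := fun s hs => by
    simp only [mem_filter, mem_univ, true_and, ← not_lt, lt_hitTime_iff] at hs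
    push Not at hs
    simpa using hs
  calc #{s | hitTime q (f s) {s} ≤ m}
      ≤ ∑ j ∈ range m, #{s | queryPt q (f s) j = s} := (card_le_card hsub).trans card_biUnion_le
    _ ≤ ∑ j ∈ range m, k ^ j := sum_le_sum fun j _ =>
        (card_filter_queryPt_eq_le q f j).trans (Nat.pow_le_pow_left hV j)
    _ < k ^ m := Nat.geomSum_lt hk fun j hj => mem_range.mp hj

lemma card_mul_le_sum_hitTime_add {k : ℕ} (hk : 2 ≤ k) (hV : Fintype.card V ≤ k)
    (q : List V → S) (f : S → S → V) (N : ℕ) :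
    ((N * Fintype.card S : ℕ) : ℕ∞)
      ≤ ∑ s, hitTime q (f s) {s} + ((∑ m ∈ range N, k ^ m : ℕ) : ℕ∞) := by
  have hunsolved (m : ℕ) : Fintype.card S ≤ #{s | (m : ℕ∞) < hitTime q (f s) {s}} + k ^ m := by
    have := card_filter_hitTime_le_lt hk hV q f m
    simp only [← not_lt] at this
    have := card_filter_add_card_filter_not (s := univ) fun s => (m : ℕ∞) < hitTime q (f s) {s}
    rw [card_univ] at this
    omega
  have hcount : N * Fintype.card S
      ≤ ∑ s, #((range N).filter (fun m : ℕ => (m : ℕ∞) < hitTime q (f s) {s}))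
          + ∑ m ∈ range N, k ^ m := by
    calc N * Fintype.card S = ∑ m ∈ range N, Fintype.card S := by simp
      _ ≤ ∑ m ∈ range N, (#{s | (m : ℕ∞) < hitTime q (f s) {s}} + k ^ m) :=
          sum_le_sum fun m _ => hunsolved m
      _ = _ := by
          rw [sum_add_distrib]
          congr 1
          exact sum_card_bipartiteAbove_eq_sum_card_bipartiteBelow
            (fun (m : ℕ) (s : S) => (m : ℕ∞) < hitTime q (f s) {s}) (s := range N) (t := univ)
  calc ((N * Fintype.card S : ℕ) : ℕ∞)
      ≤ ∑ s, (#((range N).filter (fun m : ℕ => (m : ℕ∞) < hitTime q (f s) {s})) : ℕ∞)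
          + ((∑ m ∈ range N, k ^ m : ℕ) : ℕ∞) := by exact_mod_cast hcount
    _ ≤ _ := by gcongr with s; exact card_filter_range_lt_le _ N

lemma card_mul_le_sum_expHitTime_add {k : ℕ} (hk : 2 ≤ k) (hV : Fintype.card V ≤ k)
    (μ : PMF (List V → S)) (f : S → S → V) (N : ℕ) :
    ((N * Fintype.card S : ℕ) : ℝ≥0∞)
      ≤ ∑ s, expHitTime μ (f s) {s} + ((∑ m ∈ range N, k ^ m : ℕ) : ℝ≥0∞) := by
  have hdet (q : List V → S) : ((N * Fintype.card S : ℕ) : ℝ≥0∞)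
      ≤ ∑ s, (hitTime q (f s) {s} : ℝ≥0∞) + ((∑ m ∈ range N, k ^ m : ℕ) : ℝ≥0∞) := by
    have := ENat.toENNReal_le.mpr (card_mul_le_sum_hitTime_add hk hV q f N)
    rwa [ENat.toENNReal_add, ENat.toENNReal_coe, ENat.toENNReal_coe,
      ← ENat.toENNRealRingHom_apply, map_sum] at this
  calc ((N * Fintype.card S : ℕ) : ℝ≥0∞)
      = ∑' q, μ q * ((N * Fintype.card S : ℕ) : ℝ≥0∞) := by
        rw [ENNReal.tsum_mul_right, μ.tsum_coe, one_mul]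
    _ ≤ ∑' q, μ q *
          (∑ s, (hitTime q (f s) {s} : ℝ≥0∞) + ((∑ m ∈ range N, k ^ m : ℕ) : ℝ≥0∞)) :=
        ENNReal.tsum_le_tsum fun q => by gcongr; exact hdet q
    _ = ∑ s, expHitTime μ (f s) {s} + ((∑ m ∈ range N, k ^ m : ℕ) : ℝ≥0∞) := by
        simp only [mul_add, mul_sum]
        rw [ENNReal.tsum_add, Summable.tsum_finsetSum fun s _ => ENNReal.summable,
          ENNReal.tsum_mul_right, μ.tsum_coe, one_mul]
        rfl

end BBC

/-- Simple information-theoretic lower bound (Droste–Jansen–Wegener):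
if every `f_s` takes at most `k ≥ 2` values and has `s` as target, then every
randomized strategy needs, on some instance, at least `log|S|/log k − 2`
expected queries. -/
theorem stmt1 {S V : Type*} [Fintype S] [Nonempty S] [Fintype V]
    (k : ℕ) (hk : 2 ≤ k) (hV : Fintype.card V ≤ k)
    (f : S → S → V) (μ : PMF (List V → S)) :
    ∃ s : S, ENNReal.ofReal (Real.log (Fintype.card S) / Real.log k - 2)
      ≤ BBC.expHitTime μ (f s) {s} := by
  set n := Fintype.card S
  set T := Nat.log k n
  have hsum : ∑ _s : S, ((T + 1 : ℕ) : ℝ≥0∞) ≤ ∑ s, (BBC.expHitTime μ (f s) {s} + 2) := by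
    calc ∑ _s : S, ((T + 1 : ℕ) : ℝ≥0∞) = (((T + 1) * n : ℕ) : ℝ≥0∞) := by simp [n]; ring
      _ ≤ ∑ s, BBC.expHitTime μ (f s) {s} + ((∑ m ∈ range (T + 1), k ^ m : ℕ) : ℝ≥0∞) :=
          BBC.card_mul_le_sum_expHitTime_add hk hV μ f (T + 1)
      _ ≤ ∑ s, BBC.expHitTime μ (f s) {s} + ∑ _s : S, 2 := by
          gcongr
          simpa [n, mul_comm] using
            (Nat.cast_le (α := ℝ≥0∞)).mpr (BBC.sum_range_succ_log_pow_le hk Fintype.card_ne_zero)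
      _ = ∑ s, (BBC.expHitTime μ (f s) {s} + 2) := sum_add_distrib.symm
  obtain ⟨s, -, hs⟩ := ENNReal.exists_le_of_sum_le univ_nonempty hsum
  refine ⟨s, ?_⟩
  have hlog : Real.log n / Real.log k ≤ T + 1 := by
    have := Nat.lt_floor_add_one (Real.logb k n)
    rw [Real.natFloor_logb_natCast] at this
    rw [Real.log_div_log]
    exact this.le
  rw [ENNReal.ofReal_sub _ zero_le_two, ENNReal.ofReal_ofNat, tsub_le_iff_right]
  calc ENNReal.ofReal (Real.log n / Real.log k) ≤ ENNReal.ofReal (T + 1) :=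
        ENNReal.ofReal_le_ofReal hlog
    _ = ((T + 1 : ℕ) : ℝ≥0∞) := by exact_mod_cast ENNReal.ofReal_natCast (T + 1)
    _ ≤ _ := hs
end

section
/- For every integer N ≥ 1, consider for each s ∈ S := {1, …, N} the Needle objective f_s : S → {0,1} with f_s(x) = 1 if x = s and f_s(x) = 0 otherwise, with target set {s}. Then the infimum, over all randomized strategies μ on deterministic strategies q : List {0,1} → S, of sup_{s ∈ S} E_{q∼μ}[τ(q, f_s, {s})] equals (N+1)/2; concretely, (a) for every randomized strategy μ there exists s ∈ S with E_{q∼μ}[τ(q, f_s, {s})] ≥ (N+1)/2, and (b) there exists a randomized strategy μ with E_{q∼μ}[τ(q, f_s, {s})] ≤ (N+1)/2 for every s ∈ S. -/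
open scoped ENNReal

/-!
Against the needle at `s` every answer is `false` until `s` itself is queried, so a deterministic
strategy `q` follows the single query sequence `q [], q [false], q [false, false], …` and hits `s`
at its first occurrence there. Distinct targets first occur at distinct positions, so the hitting
times of `q` summed over all `N` targets are at least `1 + 2 + ⋯ + N = N(N+1)/2`; averaging over
`μ`, some target has expected hitting time at least `(N+1)/2`. Conversely, a strategy that starts
at a uniformly random point and then cycles through `Fin N` hits every target at a time uniformly
distributed on `{1, …, N}`.
-/

namespace Finset

theorem sum_range_card_le_sum (A : Finset ℕ) : ∑ i ∈ range #A, i ≤ ∑ a ∈ A, a := by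
  induction A using Finset.induction_on_max with
  | empty => simp
  | insert a A hlt ih =>
    have hA : #A ≤ a := by
      simpa using card_le_card fun x hx => mem_range.2 (hlt x hx)
    rw [card_insert_of_notMem fun ha => (hlt a ha).false, sum_range_succ,
      sum_insert fun ha => (hlt a ha).false, add_comm a]
    exact add_le_add ih hA

theorem sum_range_le_sum_of_injective {ι : Type*} [Fintype ι] {k : ι → ℕ}
    (hk : Function.Injective k) : ∑ i ∈ range (Fintype.card ι), i ≤ ∑ x, k x := by
  classical
  simpa [card_image_of_injective _ hk, sum_image fun a _ b _ h => hk h] using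
    sum_range_card_le_sum (univ.image k)

end Finset

theorem ENNReal.sum_range_natCast_add_one (n : ℕ) :
    ∑ i ∈ Finset.range n, ((i : ℝ≥0∞) + 1) = n * ((n + 1) / 2) := by
  rw [← mul_div_assoc, ENNReal.eq_div_iff two_ne_zero ofNat_ne_top]
  induction n with
  | zero => simp
  | succ n ih =>
    rw [Finset.sum_range_succ, mul_add, ih]
    push_cast
    ring

theorem PMF.tsum_map_mul {α β : Type*} (p : PMF α) (f : α → β) (g : β → ℝ≥0∞) :
    ∑' b, p.map f b * g b = ∑' a, p a * g (f a) := by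
  classical
  simp_rw [PMF.map_apply, ← ENNReal.tsum_mul_right, ite_mul, zero_mul]
  rw [ENNReal.tsum_comm]
  exact tsum_congr fun a => by rw [tsum_ite_eq]

namespace BBC

section HitTime

variable {S V : Type*} {q : List V → S} {f : S → V} {M : Set S}

theorem hitTime_eq_top (h : ∀ k, queryPt q f k ∉ M) : hitTime q f M = ⊤ := by
  simp [hitTime, h]

theorem hitTime_eq_add_one {k : ℕ} (hk : queryPt q f k ∈ M)
    (hmin : ∀ j < k, queryPt q f j ∉ M) : hitTime q f M = k + 1 := by
  refine le_antisymm (sInf_le ⟨k, hk, rfl⟩) (le_sInf ?_)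
  rintro _ ⟨j, hj, rfl⟩
  exact add_le_add_left (by exact_mod_cast not_lt.1 fun hjk => hmin j hjk hj) 1

theorem expHitTime_map {α : Type*} (p : PMF α) (F : α → List V → S) :
    expHitTime (p.map F) f M = ∑' a, p a * hitTime (F a) f M :=
  PMF.tsum_map_mul p F _

theorem le_sum_expHitTime {ι : Type*} [Fintype ι] (μ : PMF (List V → S)) {f : ι → S → V}
    {M : ι → Set S} {c : ℝ≥0∞} (hc : ∀ q, c ≤ ∑ i, (hitTime q (f i) (M i) : ℝ≥0∞)) :
    c ≤ ∑ i, expHitTime μ (f i) (M i) := calc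
  c = ∑' q, μ q * c := by rw [ENNReal.tsum_mul_right, μ.tsum_coe, one_mul]
  _ ≤ ∑' q, ∑ i, μ q * hitTime q (f i) (M i) := by
    gcongr with q
    rw [← Finset.mul_sum]
    exact mul_le_mul_right (hc q) _
  _ = ∑ i, expHitTime μ (f i) (M i) := Summable.tsum_finsetSum fun _ _ => ENNReal.summable

end HitTime

section Needle

variable {S : Type*} [DecidableEq S]

def needle (s : S) : S → Bool := fun x => decide (x = s)

def blindQuery (q : List Bool → S) (k : ℕ) : S := q (List.replicate k false)

variable {q : List Bool → S} {s : S}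

theorem hist_needle {t : ℕ} (h : ∀ j < t, blindQuery q j ≠ s) :
    hist q (needle s) t = List.replicate t false := by
  induction t with
  | zero => rfl
  | succ t ih =>
    rw [hist, ih fun j hj => h j (by omega), List.replicate_succ']
    simpa [needle, blindQuery] using h t (by omega)

theorem queryPt_needle {t : ℕ} (h : ∀ j < t, blindQuery q j ≠ s) :
    queryPt q (needle s) t = blindQuery q t := by
  rw [queryPt, hist_needle h, blindQuery]

theorem hitTime_needle_eq_top (h : ∀ k, blindQuery q k ≠ s) : hitTime q (needle s) {s} = ⊤ :=
  hitTime_eq_top fun k => by simpa [queryPt_needle fun j _ => h j] using h k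

theorem hitTime_needle_eq_add_one {k : ℕ} (hk : blindQuery q k = s)
    (hmin : ∀ j < k, blindQuery q j ≠ s) :
    hitTime q (needle s) {s} = k + 1 :=
  hitTime_eq_add_one (by simpa [queryPt_needle hmin] using hk)
    fun j hj => by simpa [queryPt_needle fun i hi => hmin i (hi.trans hj)] using hmin j hj

theorem sum_range_le_sum_hitTime_needle [Fintype S] (q : List Bool → S) :
    ∑ i ∈ Finset.range (Fintype.card S), ((i : ℝ≥0∞) + 1) ≤
      ∑ s, (hitTime q (needle s) {s} : ℝ≥0∞) := by
  by_cases hall : ∀ s, ∃ k, blindQuery q k = s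
  · let k s := Nat.find (hall s)
    have hhit s : hitTime q (needle s) {s} = k s + 1 :=
      hitTime_needle_eq_add_one (Nat.find_spec (hall s)) fun j hj => Nat.find_min (hall s) hj
    have hk : Function.Injective k := fun a b hab => by
      rw [← Nat.find_spec (hall a), ← Nat.find_spec (hall b)]
      exact congrArg (blindQuery q) hab
    calc ∑ i ∈ Finset.range (Fintype.card S), ((i : ℝ≥0∞) + 1)
        = ((∑ i ∈ Finset.range (Fintype.card S), i : ℕ) : ℝ≥0∞) + Fintype.card S := by
          simp [Finset.sum_add_distrib]
      _ ≤ ((∑ s, k s : ℕ) : ℝ≥0∞) + Fintype.card S := by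
          gcongr
          exact Finset.sum_range_le_sum_of_injective hk
      _ = ∑ s, (hitTime q (needle s) {s} : ℝ≥0∞) := by
          simp [hhit, Finset.sum_add_distrib]
  · push Not at hall
    obtain ⟨s, hs⟩ := hall
    calc _ ≤ (hitTime q (needle s) {s} : ℝ≥0∞) := by simp [hitTime_needle_eq_top hs]
      _ ≤ _ := Finset.single_le_sum (f := fun t => (hitTime q (needle t) {t} : ℝ≥0∞))
          (fun _ _ => zero_le) (Finset.mem_univ s)

end Needle

section Cyclic

open Fin.NatCast

variable {N : ℕ} [NeZero N]

def cyclicStrategy (c : Fin N) : List Bool → Fin N := fun l => c + l.length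

theorem blindQuery_cyclicStrategy (c : Fin N) (k : ℕ) :
    blindQuery (cyclicStrategy c) k = c + k := by
  simp [blindQuery, cyclicStrategy]

theorem hitTime_cyclicStrategy_needle (c s : Fin N) :
    hitTime (cyclicStrategy c) (needle s) {s} = (s - c).val + 1 := by
  apply hitTime_needle_eq_add_one
  · rw [blindQuery_cyclicStrategy, Fin.cast_val_eq_self, add_sub_cancel]
  · intro j hj heq
    have hj' : (j : Fin N).val = (s - c).val := by
      rw [← heq, blindQuery_cyclicStrategy, add_sub_cancel_left]
    rw [Fin.val_natCast, Nat.mod_eq_of_lt (hj.trans (s - c).isLt)] at hj'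
    omega

theorem expHitTime_uniform_cyclicStrategy_needle (s : Fin N) :
    expHitTime ((PMF.uniformOfFintype (Fin N)).map cyclicStrategy) (needle s) {s} =
      (N + 1) / 2 := by
  have hN : (N : ℝ≥0∞) ≠ 0 := by simp [NeZero.ne N]
  rw [expHitTime_map, tsum_fintype]
  simp only [PMF.uniformOfFintype_apply, Fintype.card_fin, hitTime_cyclicStrategy_needle,
    ← Finset.mul_sum]
  push_cast
  rw [Fintype.sum_equiv (Equiv.subLeft s) (fun c => ((s - c).val : ℝ≥0∞) + 1)
      (fun j => (j.val : ℝ≥0∞) + 1) fun _ => rfl,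
    Fin.sum_univ_eq_sum_range (fun i => (i : ℝ≥0∞) + 1), ENNReal.sum_range_natCast_add_one,
    ENNReal.inv_mul_cancel_left hN (ENNReal.natCast_ne_top N)]

end Cyclic

end BBC

/-- The unrestricted black-box complexity of the Needle problem on a set of
size `N` is exactly `(N+1)/2`. -/
theorem stmt3 (N : ℕ) (hN : 1 ≤ N) :
    (∀ μ : PMF (List Bool → Fin N), ∃ s : Fin N,
        ((N : ℝ≥0∞) + 1) / 2 ≤ BBC.expHitTime μ (fun x => decide (x = s)) {s}) ∧
    (∃ μ : PMF (List Bool → Fin N), ∀ s : Fin N,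
        BBC.expHitTime μ (fun x => decide (x = s)) {s} ≤ ((N : ℝ≥0∞) + 1) / 2) := by
  have : NeZero N := ⟨by omega⟩
  refine ⟨fun μ => ?_, ⟨_, fun s => (BBC.expHitTime_uniform_cyclicStrategy_needle s).le⟩⟩
  have hsum : ∑ _s : Fin N, ((N : ℝ≥0∞) + 1) / 2 ≤ ∑ s, BBC.expHitTime μ (BBC.needle s) {s} := by
    rw [Finset.sum_const, Finset.card_univ, Fintype.card_fin, nsmul_eq_mul,
      ← ENNReal.sum_range_natCast_add_one]
    simpa only [Fintype.card_fin] using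
      BBC.le_sum_expHitTime μ BBC.sum_range_le_sum_hitTime_needle
  obtain ⟨s, -, hs⟩ := ENNReal.exists_le_of_sum_le Finset.univ_nonempty hsum
  exact ⟨s, hs⟩
end

section
/- For every integer n ≥ 1 there exists a randomized strategy μ on deterministic strategies q : List ℕ → {0,1}^n such that for every z ∈ {0,1}^n and every permutation σ of {1, …, n}, E_{q∼μ}[τ(q, BV_{z,σ}, {z})] ≤ ⌈log₂ n⌉ + 2. -/
open scoped ENNReal

/-- The generalized binary-value function `BV_{z,σ}`. -/
def BVp {n : ℕ} (z : Fin n → Bool) (σ : Equiv.Perm (Fin n)) (x : Fin n → Bool) : ℕ :=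
  ∑ i : Fin n, if x (σ i) = z (σ i) then 2 ^ (i : ℕ) else 0

/- ### Auxiliary lemmas -/

lemma aux_sum_pow_lt (L : ℕ) (g : ℕ → Bool) :
    (∑ k ∈ Finset.range L, if g k then 2^k else 0) < 2^L := by
  induction L with
  | zero => simp
  | succ L ih =>
    rw [Finset.sum_range_succ, pow_succ]
    have : (if g L then 2^L else 0) ≤ 2^L := by split <;> simp
    omega

lemma aux_testBit_sum (L : ℕ) (g : ℕ → Bool) (j : ℕ) :
    (∑ k ∈ Finset.range L, if g k then 2^k else 0).testBit j = (g j && decide (j < L)) := by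
  induction L with
  | zero => simp
  | succ L ih =>
    rw [Finset.sum_range_succ]
    rcases lt_trichotomy j L with h | rfl | h
    · by_cases hg : g L
      · simp only [hg, if_true]
        rw [add_comm, Nat.testBit_two_pow_add_gt h, ih]
        simp [h, Nat.lt_succ_of_lt h]
      · simp [hg, ih, h, Nat.lt_succ_of_lt h]
    · by_cases hg : g j
      · simp only [hg, if_true]
        rw [add_comm, Nat.testBit_two_pow_add_eq,
          Nat.testBit_lt_two_pow (aux_sum_pow_lt _ _)]
        simp [hg]
      · simp [hg, ih]
    · have h1 : (∑ k ∈ Finset.range L, if g k then 2^k else 0)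
          + (if g L then 2^L else 0) < 2^(L+1) := by
        have := aux_sum_pow_lt L g
        have : (if g L then 2^L else 0) ≤ 2^L := by split <;> simp
        rw [pow_succ]; omega
      rw [Nat.testBit_lt_two_pow
        (lt_of_lt_of_le h1 (Nat.pow_le_pow_right (by norm_num) h))]
      have : ¬ j < L + 1 := by omega
      simp [this]

lemma aux_sum_testBit_eq (L m : ℕ) (hm : m < 2^L) :
    (∑ k ∈ Finset.range L, if m.testBit k then 2^k else 0) = m := by
  apply Nat.eq_of_testBit_eq
  intro j
  rw [aux_testBit_sum]
  by_cases h : j < L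
  · simp [h]
  · simp [h, Nat.testBit_lt_two_pow
      (lt_of_lt_of_le hm (Nat.pow_le_pow_right (by norm_num) (le_of_not_gt h)))]

lemma aux_hist_length {S V : Type*} (q : List V → S) (f : S → V) (t : ℕ) :
    (BBC.hist q f t).length = t := by
  induction t with
  | zero => rfl
  | succ t ih => simp [BBC.hist, ih]

lemma aux_hist_getD {S V : Type*} (q : List V → S) (f : S → V) (d : V) {k t : ℕ} (h : k < t) :
    (BBC.hist q f t).getD k d = f (BBC.queryPt q f k) := by
  induction t with
  | zero => omega
  | succ t ih =>
    rcases Nat.lt_succ_iff_lt_or_eq.mp h with h' | rfl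
    · rw [BBC.hist, List.getD_append _ _ _ _ (by rw [aux_hist_length]; exact h'), ih h']
    · rw [BBC.hist, List.getD_eq_getElem _ _ (by simp [aux_hist_length])]
      simp [aux_hist_length, BBC.queryPt]

lemma aux_BVp_testBit {n : ℕ} (z : Fin n → Bool) (σ : Equiv.Perm (Fin n)) (x : Fin n → Bool)
    (i : Fin n) : (BVp z σ x).testBit i = (x (σ i) == z (σ i)) := by
  set g : ℕ → Bool := fun k => if h : k < n then (x (σ ⟨k, h⟩) == z (σ ⟨k, h⟩)) else false with hg
  have step : ∀ i : Fin n, (if x (σ i) = z (σ i) then 2^(i:ℕ) else 0)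
      = (fun k => if g k then 2^k else 0) (i : ℕ) := by
    intro i
    simp only [hg, i.isLt, dif_pos, Fin.eta, beq_iff_eq]
  have hsum : BVp z σ x = ∑ k ∈ Finset.range n, if g k then 2^k else 0 := by
    rw [BVp, Finset.sum_congr rfl (fun i _ => step i),
      Fin.sum_univ_eq_sum_range (fun k => if g k then 2^k else 0) n]
  rw [hsum, aux_testBit_sum]
  simp [hg, i.isLt]

/-- The deterministic strategy: query the all-zeros string, then the `L`
bit-mask strings, then reconstruct the optimum from the observed values. -/
def strat (n L : ℕ) (h : List ℕ) : Fin n → Bool :=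
  if h.length = 0 then fun _ => false
  else if h.length ≤ L then fun j => (j : ℕ).testBit (h.length - 1)
  else fun j => decide (∃ i : Fin n,
    (∑ k ∈ Finset.range L,
        if (h.getD (k+1) 0).testBit i == !((h.getD 0 0).testBit i) then 2^k else 0) = (j : ℕ)
    ∧ ((h.getD 0 0).testBit i) = false)

/-- The unrestricted black-box complexity of `{BV_{z,σ} | z, σ}` is at most
`⌈log₂ n⌉ + 2`. -/
theorem stmt5 (n : ℕ) (hn : 1 ≤ n) :
    ∃ μ : PMF (List ℕ → (Fin n → Bool)),
      ∀ (z : Fin n → Bool) (σ : Equiv.Perm (Fin n)),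
        BBC.expHitTime μ (BVp z σ) {z} ≤ (Nat.clog 2 n : ℝ≥0∞) + 2 := by
  set L := Nat.clog 2 n with hL
  set q : List ℕ → (Fin n → Bool) := strat n L with hq
  refine ⟨PMF.pure q, fun z σ => ?_⟩
  set f := BVp z σ with hf
  have hn2 : n ≤ 2 ^ L := Nat.le_pow_clog (by norm_num) n
  -- expected hitting time of a point mass is the hitting time
  have hexp : BBC.expHitTime (PMF.pure q) f {z} = (BBC.hitTime q f {z} : ℝ≥0∞) := by
    rw [BBC.expHitTime, tsum_eq_single q (fun q' hq' => by simp [PMF.pure_apply, hq'])]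
    simp
  -- the first query is the all-zeros string
  have hq0 : BBC.queryPt q f 0 = fun _ => false := by
    show strat n L (BBC.hist q f 0) = _
    simp [strat, BBC.hist]
  -- queries 2, …, L+1 are the bit-mask strings
  have hqk : ∀ t, t + 1 ≤ L → BBC.queryPt q f (t + 1) = fun j : Fin n => (j : ℕ).testBit t := by
    intro t ht
    show strat n L (BBC.hist q f (t + 1)) = _
    have hlen : (BBC.hist q f (t + 1)).length = t + 1 := aux_hist_length _ _ _
    simp [strat, hlen, ht]
  -- query L+2 is the optimum
  have key : BBC.queryPt q f (L + 1) = z := by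
    funext j
    show strat n L (BBC.hist q f (L + 1)) j = z j
    have hlen : (BBC.hist q f (L + 1)).length = L + 1 := aux_hist_length _ _ _
    have h1 : ¬ ((BBC.hist q f (L + 1)).length = 0) := by omega
    have h2 : ¬ ((BBC.hist q f (L + 1)).length ≤ L) := by omega
    rw [strat, if_neg h1, if_neg h2]
    -- compute the observed values
    have hv0 : (BBC.hist q f (L + 1)).getD 0 0 = f (fun _ => false) := by
      rw [aux_hist_getD q f 0 (by omega : 0 < L + 1), hq0]
    have hb : ∀ i : Fin n, (((BBC.hist q f (L + 1)).getD 0 0).testBit i) = !(z (σ i)) := by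
      intro i
      rw [hv0, hf, aux_BVp_testBit]
      cases z (σ i) <;> rfl
    have hvk : ∀ k, k < L → ∀ i : Fin n,
        (((BBC.hist q f (L + 1)).getD (k + 1) 0).testBit i) =
          (((σ i : ℕ)).testBit k == z (σ i)) := by
      intro k hk i
      rw [aux_hist_getD q f 0 (by omega : k + 1 < L + 1), hqk k hk, hf, aux_BVp_testBit]
    have hbb : ∀ a b : Bool, ((a == b) == b) = a := by decide
    have hsum : ∀ i : Fin n,
        (∑ k ∈ Finset.range L,
          if ((BBC.hist q f (L + 1)).getD (k+1) 0).testBit i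
              == !(((BBC.hist q f (L + 1)).getD 0 0).testBit i) then 2^k else 0) = (σ i : ℕ) := by
      intro i
      have : ∀ k ∈ Finset.range L,
          (if ((BBC.hist q f (L + 1)).getD (k+1) 0).testBit i
              == !(((BBC.hist q f (L + 1)).getD 0 0).testBit i) then 2^k else 0)
          = (if ((σ i : ℕ)).testBit k then 2^k else 0) := by
        intro k hk
        rw [hvk k (Finset.mem_range.mp hk) i, hb i, Bool.not_not, hbb]
      rw [Finset.sum_congr rfl this,
        aux_sum_testBit_eq L (σ i : ℕ) (lt_of_lt_of_le (σ i).isLt hn2)]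
    -- now the decide reduces to z j
    have hiff : (∃ i : Fin n,
        (∑ k ∈ Finset.range L,
          if ((BBC.hist q f (L + 1)).getD (k+1) 0).testBit i
              == !(((BBC.hist q f (L + 1)).getD 0 0).testBit i) then 2^k else 0) = (j : ℕ)
        ∧ (((BBC.hist q f (L + 1)).getD 0 0).testBit i) = false)
        ↔ z j = true := by
      constructor
      · rintro ⟨i, hi1, hi2⟩
        rw [hsum i] at hi1
        rw [hb i] at hi2
        have hzi : z (σ i) = true := by
          cases hzz : z (σ i)
          · rw [hzz] at hi2; simp at hi2
          · rfl
        have : σ i = j := Fin.ext hi1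
        rwa [this] at hzi
      · intro hzj
        refine ⟨σ.symm j, ?_, ?_⟩
        · rw [hsum]; simp
        · rw [hb]; simp [hzj]
    rcases Bool.eq_false_or_eq_true (z j) with hzj | hzj
    · rw [hzj, decide_eq_true (hiff.mpr hzj)]
    · rw [hzj, decide_eq_false (by rw [hiff, hzj]; simp)]
  -- conclude
  have hmem : ((L + 1 : ℕ) : ℕ∞) + 1 ∈
      ((fun k : ℕ => (k : ℕ∞) + 1) '' {k | BBC.queryPt q f k ∈ ({z} : Set (Fin n → Bool))}) :=
    ⟨L + 1, key, rfl⟩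
  have hhit : BBC.hitTime q f {z} ≤ ((L + 1 : ℕ) : ℕ∞) + 1 := sInf_le hmem
  rw [hexp]
  calc (BBC.hitTime q f {z} : ℝ≥0∞) ≤ ((((L + 1 : ℕ) : ℕ∞) + 1 : ℕ∞) : ℝ≥0∞) := by
        exact_mod_cast hhit
    _ = (L : ℝ≥0∞) + 2 := by push_cast; ring
end

section
/- Let S be a finite nonempty set, let I be an index set, and for each i ∈ I let f_i : S → ℝ, with M_i := { x ∈ S : f_i(x) = max f_i } its (nonempty) set of maximizers. Let g : ℝ → ℝ be such that for every i ∈ I the set of maximizers of g ∘ f_i equals M_i. Then inf_μ sup_{i ∈ I} E_{q∼μ}[τ(q, g ∘ f_i, M_i)] ≥ inf_μ sup_{i ∈ I} E_{q∼μ}[τ(q, f_i, M_i)], where both infima range over all randomized strategies μ on deterministic strategies q : List ℝ → S. -/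
open scoped ENNReal

namespace BBC

variable {S V : Type*}

lemma hist_simul (q : List ℝ → S) (f : S → ℝ) (g : ℝ → ℝ) (t : ℕ) :
    (hist (fun l => q (l.map g)) f t).map g = hist q (fun x => g (f x)) t := by
  induction t with
  | zero => simp [hist]
  | succ t ih => simp [hist, ih]

lemma queryPt_simul (q : List ℝ → S) (f : S → ℝ) (g : ℝ → ℝ) (t : ℕ) :
    queryPt (fun l => q (l.map g)) f t = queryPt q (fun x => g (f x)) t := by
  simp only [queryPt]
  rw [← hist_simul q f g t]

lemma hitTime_simul (q : List ℝ → S) (f : S → ℝ) (g : ℝ → ℝ) (M : Set S) :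
    hitTime (fun l => q (l.map g)) f M = hitTime q (fun x => g (f x)) M := by
  unfold hitTime
  congr 1
  ext n
  simp [queryPt_simul]

lemma tsum_map_mul {α : Type*} (μ : PMF α) (T : α → α) (h : α → ℝ≥0∞) :
    ∑' q, (μ.map T) q * h q = ∑' q, μ q * h (T q) := by
  classical
  simp only [PMF.map_apply]
  calc ∑' q, (∑' a, if q = T a then μ a else 0) * h q
      = ∑' q, ∑' a, (if q = T a then μ a else 0) * h q := by
        congr 1; ext q; rw [ENNReal.tsum_mul_right]
    _ = ∑' a, ∑' q, (if q = T a then μ a else 0) * h q := ENNReal.tsum_comm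
    _ = ∑' a, μ a * h (T a) := by
        congr 1; ext a
        rw [tsum_eq_single (T a)]
        · simp
        · intro b hb; simp [hb]

end BBC

/-- Lower-bound transfer theorem: composing all instances with a map `g` that
preserves the sets of maximizers can only increase the black-box complexity. -/
theorem stmt9 {S : Type*} [Fintype S] [Nonempty S] {I : Type*}
    (f : I → S → ℝ) (g : ℝ → ℝ)
    (hg : ∀ i, {x : S | ∀ y, g (f i y) ≤ g (f i x)} = {x : S | ∀ y, f i y ≤ f i x}) :
    (⨅ μ : PMF (List ℝ → S), ⨆ i : I,
        BBC.expHitTime μ (f i) {x : S | ∀ y, f i y ≤ f i x}) ≤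
    (⨅ μ : PMF (List ℝ → S), ⨆ i : I,
        BBC.expHitTime μ (fun x => g (f i x)) {x : S | ∀ y, f i y ≤ f i x}) := by
  refine le_iInf fun μ => ?_
  set T : (List ℝ → S) → (List ℝ → S) := fun q l => q (l.map g)
  refine iInf_le_of_le (μ.map T) (iSup_mono fun i => le_of_eq ?_)
  unfold BBC.expHitTime
  rw [BBC.tsum_map_mul μ T (fun q => (BBC.hitTime q (f i) _ : ℝ≥0∞))]
  congr 1
  ext q
  rw [BBC.hitTime_simul q (f i) g]
end

section
/- There exist c > 0 and n₀ ∈ ℕ such that for all n ≥ n₀ the following holds: whenever t ∈ ℕ and x⁽¹⁾, …, x⁽ᵗ⁾ ∈ {0, …, n−1}^n are such that the map sending z ∈ {0, …, n−1}^n to the vector (f_z(x⁽¹⁾), …, f_z(x⁽ᵗ⁾)) is injective, one has t ≥ c·n·log n (natural logarithm). In other words, any non-adaptive identification scheme for the Mastermind problem with n positions and n colors requires at least c·n·log n queries. -/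
/-- The Mastermind function: `MM z x` is the number of positions in which `x`
agrees with the secret string `z`. -/
def MM {n k : ℕ} (z x : Fin n → Fin k) : ℕ :=
  (Finset.univ.filter fun j => x j = z j).card

/-!
Averaged over all secrets `z`, each query scores exactly `1`, so the `t` answers sum to `t` on
average, and by Markov's inequality at least half of the `n ^ n` secrets have total score at
most `2 t`. An injective scheme maps these secrets to distinct vectors in `ℕ ^ t` with sum at most
`2 t`, of which there are at most `2 ^ (3 t)`: weighting a vector `a` by `2 ^ (-∑ a)` bounds their
number by `2 ^ (2 t)` times a product of `t` geometric series. Hence `n ^ n ≤ 2 ^ (3 t + 1)`.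
-/

open Finset

theorem sum_MM_eq_mul_pow (n k : ℕ) (x : Fin n → Fin k) :
    ∑ z : Fin n → Fin k, MM z x = n * k ^ (n - 1) := by
  have hMM (z : Fin n → Fin k) : MM z x = ∑ j, if z j = x j then 1 else 0 := by
    simp only [MM, card_filter, eq_comm]
  have hfiber (j : Fin n) : #{z : Fin n → Fin k | z j = x j} = k ^ (n - 1) := by
    simpa using Fintype.card_filter_piFinset_const_eq_of_mem univ j (mem_univ (x j))
  simp_rw [hMM]
  rw [sum_comm]
  simp [hfiber]

theorem card_le_two_mul_card_filter_le_two_mul {α : Type*} (s : Finset α) (f : α → ℕ) (m : ℕ)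
    (hf : ∑ a ∈ s, f a ≤ m * #s) : #s ≤ 2 * #{a ∈ s | f a ≤ 2 * m} := by
  have hmarkov : (2 * m + 1) * #{a ∈ s | ¬ f a ≤ 2 * m} ≤ m * #s :=
    calc (2 * m + 1) * #{a ∈ s | ¬ f a ≤ 2 * m} ≤ ∑ a ∈ s with ¬ f a ≤ 2 * m, f a := by
          rw [mul_comm, ← smul_eq_mul]
          exact card_nsmul_le_sum _ _ _ fun a ha => by simp at ha; omega
      _ ≤ ∑ a ∈ s, f a := sum_le_sum_of_subset (filter_subset _ _)
      _ ≤ m * #s := hf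
  have hsplit := card_filter_add_card_filter_not (s := s) (fun a => f a ≤ 2 * m)
  nlinarith

theorem card_le_two_pow_of_sum_le {t : ℕ} (A : Finset (Fin t → ℕ)) (m : ℕ)
    (hA : ∀ a ∈ A, ∑ i, a i ≤ m) : (#A : ℝ) ≤ 2 ^ (m + t) := by
  have hsub : A ⊆ Fintype.piFinset fun _ => range (m + 1) := fun a ha => by
    simp only [Fintype.mem_piFinset, mem_range, Nat.lt_succ_iff]
    exact fun i => (single_le_sum (fun _ _ => Nat.zero_le _) (mem_univ i)).trans (hA a ha)
  calc (#A : ℝ) = ∑ a ∈ A, 1 := by simp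
    _ ≤ ∑ a ∈ A, 2 ^ m * ∏ i, (1 / 2 : ℝ) ^ a i := sum_le_sum fun a ha => by
        rw [prod_pow_eq_pow_sum, one_div_pow, mul_one_div, le_div_iff₀ (by positivity), one_mul]
        exact pow_le_pow_right₀ one_le_two (hA a ha)
    _ ≤ ∑ a ∈ Fintype.piFinset fun _ => range (m + 1), 2 ^ m * ∏ i, (1 / 2 : ℝ) ^ a i :=
        sum_le_sum_of_subset_of_nonneg hsub fun _ _ _ => by positivity
    _ = 2 ^ m * ∏ _i : Fin t, ∑ k ∈ range (m + 1), (1 / 2 : ℝ) ^ k := by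
        rw [← mul_sum, prod_univ_sum]
    _ ≤ 2 ^ m * 2 ^ t := by
        gcongr
        exact (prod_le_prod (fun _ _ => by positivity) fun _ _ => sum_geometric_two_le _).trans
          (by simp)
    _ = 2 ^ (m + t) := (pow_add _ _ _).symm

theorem mul_log_le_of_pow_le_two_pow {n t : ℕ} (hn : 2 ≤ n)
    (h : (n : ℝ) ^ n ≤ 2 ^ (3 * t + 1)) : n * Real.log n ≤ 4 * t := by
  have hlog : n * Real.log n ≤ (3 * t + 1) * Real.log 2 := by
    simpa [Real.log_pow] using Real.log_le_log (by positivity) h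
  have hlog2 : 0 < Real.log 2 := Real.log_pos one_lt_two
  have hlog2_lt : Real.log 2 < 1 := Real.log_two_lt_d9.trans (by norm_num)
  have hn' : (2 : ℝ) ≤ n := by exact_mod_cast hn
  have hlogn : Real.log 2 ≤ Real.log n := Real.log_le_log two_pos hn'
  have ht : (1 : ℝ) ≤ t := by
    rcases Nat.eq_zero_or_pos t with rfl | ht
    · norm_num at hlog
      nlinarith
    · exact_mod_cast ht
  nlinarith

/-- Any non-adaptive identification scheme for Mastermind with `n` positions and
`n` colors requires `Ω(n log n)` queries. -/
theorem stmt11 : ∃ c > (0 : ℝ), ∃ n₀ : ℕ, ∀ n : ℕ, n₀ ≤ n →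
    ∀ (t : ℕ) (x : Fin t → (Fin n → Fin n)),
      Function.Injective (fun z : Fin n → Fin n => fun i : Fin t => MM z (x i)) →
      c * n * Real.log n ≤ t := by
  refine ⟨1 / 4, by norm_num, 2, fun n hn t x hinj => ?_⟩
  set good : Finset (Fin n → Fin n) := {z | ∑ i, MM z (x i) ≤ 2 * t}
  have htotal : ∑ z : Fin n → Fin n, ∑ i, MM z (x i) = t * #(univ : Finset (Fin n → Fin n)) := by
    rw [sum_comm]
    simp [sum_MM_eq_mul_pow, ← pow_succ', Nat.sub_add_cancel (by omega : 1 ≤ n)]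
  have hhalf : #(univ : Finset (Fin n → Fin n)) ≤ 2 * #good :=
    card_le_two_mul_card_filter_le_two_mul univ _ t htotal.le
  have hgood : (#good : ℝ) ≤ 2 ^ (3 * t) := by
    have := card_le_two_pow_of_sum_le (good.image fun z i => MM z (x i)) (2 * t) (by simp [good])
    rwa [card_image_of_injective _ hinj, show 2 * t + t = 3 * t by ring] at this
  have hpow : (n : ℝ) ^ n ≤ 2 ^ (3 * t + 1) :=
    calc (n : ℝ) ^ n = #(univ : Finset (Fin n → Fin n)) := by simp
      _ ≤ 2 * #good := by exact_mod_cast hhalf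
      _ ≤ 2 * 2 ^ (3 * t) := by gcongr
      _ = 2 ^ (3 * t + 1) := (pow_succ' _ _).symm
  linarith [mul_log_le_of_pow_le_two_pow hn hpow]
end

section
/- Let n ≥ 1 and k ≥ 1, and let D be a map assigning to each k-tuple (y¹, …, y^k) of points of {0,1}^n a probability mass function D(· | y¹, …, y^k) on {0,1}^n. Then D is a k-ary unbiased distribution family if and only if for every Hamming automorphism α of {0,1}^n, every x ∈ {0,1}^n, and every k-tuple (y¹, …, y^k), one has D(x | y¹, …, y^k) = D(α(x) | α(y¹), …, α(y^k)). -/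
open scoped ENNReal

/-- Bit strings of length `n`. -/
abbrev Point (n : ℕ) := Fin n → Bool

/-- Pointwise XOR (the `⊕`-shift) of bit strings. -/
def pxor {n : ℕ} (x z : Point n) : Point n := fun i => xor (x i) (z i)

/-- The Hamming distance of two bit strings. -/
def hamming {n : ℕ} (x y : Point n) : ℕ :=
  (Finset.univ.filter fun i => x i ≠ y i).card

/-- `D` is a `k`-ary unbiased distribution family: it is invariant under
`⊕`-shifts and under permutations of the positions. -/
def IsUnbiased {n k : ℕ} (D : (Fin k → Point n) → PMF (Point n)) : Prop :=
  (∀ (ys : Fin k → Point n) (x z : Point n),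
      D ys x = D (fun i => pxor (ys i) z) (pxor x z)) ∧
  (∀ (ys : Fin k → Point n) (x : Point n) (σ : Equiv.Perm (Fin n)),
      D ys x = D (fun i => (ys i) ∘ σ) (x ∘ σ))

/-!
A Hamming isometry `α` of `{0,1}^n` is a coordinate permutation followed by an `⊕`-shift.
Indeed `β x := α x ⊕ α 0` is an isometry fixing `0`, so it preserves weights and therefore
permutes the unit vectors `eᵢ`, say `β eᵢ = e_{τ i}`; since `xᵢ = 1` exactly when
`d(x, eᵢ) < d(x, 0)`, it follows that `(β x)_{τ i} = xᵢ`. Hence invariance under shifts and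
permutations gives invariance under all Hamming automorphisms; the converse holds because
shifts and permutations are themselves Hamming automorphisms.
-/

section

variable {n : ℕ}

lemma hamming_eq_hammingDist (x y : Point n) : hamming x y = hammingDist x y := rfl

lemma pxor_pxor_cancel (x z : Point n) : pxor (pxor x z) z = x := by
  funext i; simp [pxor]

lemma hamming_pxor_pxor (x y z : Point n) : hamming (pxor x z) (pxor y z) = hamming x y :=
  hammingDist_comp (fun i b => xor b (z i)) fun i a b h => by simpa using h

lemma hamming_comp_perm (x y : Point n) (σ : Equiv.Perm (Fin n)) :
    hamming (x ∘ σ) (y ∘ σ) = hamming x y :=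
  Finset.card_equiv σ (by simp)

lemma single_true_left_injective : Function.Injective (Pi.single · true : Fin n → Point n) := by
  intro i j h
  simpa [Pi.single_apply] using congrFun h i

lemma hamming_zero_eq_one_iff (x : Point n) :
    hamming x 0 = 1 ↔ ∃ i, x = Pi.single i true := by
  constructor
  · intro h
    obtain ⟨i, hi⟩ := Finset.card_eq_one.mp h
    refine ⟨i, funext fun j => Bool.eq_iff_iff.mpr ?_⟩
    simpa [Pi.single_apply, Bool.zero_eq_false] using congrArg (j ∈ ·) hi
  · rintro ⟨i, rfl⟩
    rw [hamming_eq_hammingDist, hammingDist_zero_right]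
    simp [hammingNorm, Pi.single_apply, Finset.filter_eq']

lemma apply_eq_true_iff_hamming_single_lt (x : Point n) (i : Fin n) :
    x i = true ↔ hamming x (Pi.single i true) < hamming x 0 := by
  simp only [hamming, Finset.card_filter]
  rw [← Finset.add_sum_erase _ _ (Finset.mem_univ i),
    ← Finset.add_sum_erase _ _ (Finset.mem_univ i)]
  have hsingle : ∀ j ∈ Finset.univ.erase i, (Pi.single i true : Point n) j = 0 := fun j hj =>
    Pi.single_eq_of_ne (Finset.ne_of_mem_erase hj) _
  rw [Finset.sum_congr rfl fun j hj => by rw [hsingle j hj]]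
  cases x i <;> simp

lemma exists_perm_of_isometry_of_map_zero {β : Point n → Point n}
    (hβ : ∀ x y, hamming (β x) (β y) = hamming x y) (hβ0 : β 0 = 0) :
    ∃ π : Equiv.Perm (Fin n), ∀ x, β x = x ∘ π := by
  have hβinj : Function.Injective β := fun x y hxy => hammingDist_eq_zero.mp <| by
    rw [← hamming_eq_hammingDist, ← hβ, hxy, hamming_eq_hammingDist, hammingDist_self]
  have hweight (x : Point n) : hamming (β x) 0 = hamming x 0 := by
    simpa [hβ0] using hβ x 0
  have hunit (i : Fin n) : ∃ j, β (Pi.single i true) = Pi.single j true := by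
    rw [← hamming_zero_eq_one_iff, hweight, hamming_zero_eq_one_iff]
    exact ⟨i, rfl⟩
  choose τ hτ using hunit
  have hτinj : Function.Injective τ := fun i j hij =>
    single_true_left_injective <| hβinj <| by rw [hτ, hτ, hij]
  set σ := Equiv.ofBijective τ (Finite.injective_iff_bijective.mp hτinj)
  have hcoord (x : Point n) (i : Fin n) : β x (σ i) = x i := by
    rw [Bool.eq_iff_iff, apply_eq_true_iff_hamming_single_lt, apply_eq_true_iff_hamming_single_lt,
      Equiv.ofBijective_apply, ← hτ, hβ, hweight]
  exact ⟨σ.symm, fun x => funext fun j => by simpa using hcoord x (σ.symm j)⟩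

lemma exists_perm_pxor_of_isometry {α : Point n → Point n}
    (hα : ∀ x y, hamming (α x) (α y) = hamming x y) :
    ∃ (π : Equiv.Perm (Fin n)) (z : Point n), ∀ x, α x = pxor (x ∘ π) z := by
  obtain ⟨π, hπ⟩ := exists_perm_of_isometry_of_map_zero (β := fun x => pxor (α x) (α 0))
    (fun x y => by rw [hamming_pxor_pxor, hα]) (by funext i; simp [pxor, Bool.zero_eq_false])
  exact ⟨π, α 0, fun x => by rw [← hπ, pxor_pxor_cancel]⟩

end

theorem stmt14_general (n k : ℕ)
    (D : (Fin k → Point n) → PMF (Point n)) :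
    IsUnbiased D ↔
      ∀ α : Point n ≃ Point n,
        (∀ x y : Point n, hamming (α x) (α y) = hamming x y) →
        ∀ (x : Point n) (ys : Fin k → Point n),
          D ys x = D (fun i => α (ys i)) (α x) := by
  constructor
  · rintro ⟨hpxor, hperm⟩ α hα x ys
    obtain ⟨π, z, hαeq⟩ := exists_perm_pxor_of_isometry hα
    simp only [hαeq]
    exact (hperm ys x π).trans (hpxor _ _ z)
  · intro h
    refine ⟨fun ys x z => ?_, fun ys x σ => ?_⟩
    · exact h (Function.Involutive.toPerm _ (pxor_pxor_cancel · z))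
        (hamming_pxor_pxor · · z) x ys
    · exact h (σ.symm.arrowCongr (Equiv.refl Bool)) (hamming_comp_perm · · σ) x ys

/-- Characterization of unbiasedness: a family of distributions is `k`-ary
unbiased if and only if it is invariant under all Hamming automorphisms. -/
theorem stmt14 (n k : ℕ) (hn : 1 ≤ n) (hk : 1 ≤ k)
    (D : (Fin k → Point n) → PMF (Point n)) :
    IsUnbiased D ↔
      ∀ α : Point n ≃ Point n,
        (∀ x y : Point n, hamming (α x) (α y) = hamming x y) →
        ∀ (x : Point n) (ys : Fin k → Point n),
          D ys x = D (fun i => α (ys i)) (α x) :=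
  stmt14_general n k D
end

section
/- Let n ≥ 2 and k ≥ 1, let S := {1, …, n}^{n−1}, let G be a group of bijections of S (a subgroup of the symmetric group on S), let z¹, …, z^k ∈ S, and let G₀ := { g ∈ G : g(zⁱ) = zⁱ for all i ∈ {1, …, k} }. Then for every probability mass function D on S the following two statements are equivalent: (i) there exists a map D′ assigning to each k-tuple (y¹, …, y^k) ∈ S^k a probability mass function D′(· | y¹, …, y^k) on S such that D′(x | y¹, …, y^k) = D′(g(x) | g(y¹), …, g(y^k)) for all g ∈ G, all x ∈ S, and all k-tuples (y¹, …, y^k), and such that D′(· | z¹, …, z^k) = D; (ii) D(x) = D(g(x)) for all g ∈ G₀ and all x ∈ S. -/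
open scoped ENNReal

/-- Push-forward of a PMF along a permutation. -/
noncomputable def stmt16.mapP {α : Type*} (g : Equiv.Perm α) (D : PMF α) : PMF α :=
  ⟨fun x => D (g.symm x), (g.symm.hasSum_iff).2 D.2⟩

@[simp] lemma stmt16.mapP_apply {α : Type*} (g : Equiv.Perm α) (D : PMF α) (x : α) :
    stmt16.mapP g D x = D (g.symm x) := rfl

/-- Simplified verification of unbiasedness (for the search space
`S = {1,…,n}^{n−1}`): a distribution `D` arises as the member at
`(z¹,…,z^k)` of some `k`-ary `G`-unbiased family if and only if `D` is
invariant under every `g ∈ G` fixing `z¹,…,z^k`. -/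
theorem stmt16 (n k : ℕ) (hn : 2 ≤ n) (hk : 1 ≤ k)
    (G : Subgroup (Equiv.Perm (Fin (n - 1) → Fin n)))
    (z : Fin k → (Fin (n - 1) → Fin n))
    (D : PMF (Fin (n - 1) → Fin n)) :
    (∃ D' : (Fin k → (Fin (n - 1) → Fin n)) → PMF (Fin (n - 1) → Fin n),
        (∀ g ∈ G, ∀ (x : Fin (n - 1) → Fin n) (ys : Fin k → (Fin (n - 1) → Fin n)),
            D' ys x = D' (fun i => g (ys i)) (g x)) ∧
        D' z = D) ↔
    (∀ g ∈ G, (∀ i : Fin k, g (z i) = z i) → ∀ x : Fin (n - 1) → Fin n, D x = D (g x)) := by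
  classical
  haveI : NeZero n := ⟨by omega⟩
  constructor
  · rintro ⟨D', hinv, hz⟩ g hg hfix x
    have h1 := hinv g hg x z
    have h2 : (fun i => g (z i)) = z := funext hfix
    rw [h2, hz] at h1
    exact h1
  · intro h
    -- orbit predicate
    set P : (Fin k → (Fin (n - 1) → Fin n)) → Prop := fun ys => ∃ g : Equiv.Perm (Fin (n - 1) → Fin n), g ∈ G ∧ ∀ i, g (z i) = ys i
      with hP
    set D' : (Fin k → (Fin (n - 1) → Fin n)) → PMF (Fin (n - 1) → Fin n) := fun ys =>
      if hys : P ys then stmt16.mapP hys.choose D else PMF.uniformOfFintype (Fin (n - 1) → Fin n) with hD'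
    refine ⟨D', ?_, ?_⟩
    · intro g hg x ys
      by_cases hys : P ys
      · have hys' : P (fun i => g (ys i)) := by
          obtain ⟨g₁, hg₁, hfix₁⟩ := hys
          exact ⟨g * g₁, mul_mem hg hg₁, fun i => by
            simp [Equiv.Perm.mul_apply, hfix₁ i]⟩
        have e1 : D' ys x = D (hys.choose.symm x) := by simp [hD', hys]
        have e2 : D' (fun i => g (ys i)) (g x) = D (hys'.choose.symm (g x)) := by
          simp [hD', hys']
        rw [e1, e2]
        obtain ⟨hg₁, hfix₁⟩ := hys.choose_spec
        obtain ⟨hg₂, hfix₂⟩ := hys'.choose_spec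
        set g₁ := hys.choose
        set g₂ := hys'.choose
        have hs : (g₂⁻¹ * g * g₁) ∈ G := mul_mem (mul_mem (inv_mem hg₂) hg) hg₁
        have hfix₂' : ∀ i, g₂ (z i) = g (ys i) := hfix₂
        have hsfix : ∀ i, (g₂⁻¹ * g * g₁) (z i) = z i := by
          intro i
          simp [Equiv.Perm.mul_apply, hfix₁ i, ← hfix₂' i]
        have := h _ hs hsfix (g₁.symm x)
        simpa [Equiv.Perm.mul_apply] using this
      · have hys' : ¬ P (fun i => g (ys i)) := by
          rintro ⟨g₂, hg₂, hfix₂⟩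
          exact hys ⟨g⁻¹ * g₂, mul_mem (inv_mem hg) hg₂, fun i => by
            simp [Equiv.Perm.mul_apply, hfix₂ i]⟩
        simp [hD', hys, hys', PMF.uniformOfFintype_apply]
    · have hz : P z := ⟨1, one_mem G, fun i => rfl⟩
      ext x
      have e1 : D' z x = D (hz.choose.symm x) := by simp [hD', hz]
      obtain ⟨hg₁, hfix₁⟩ := hz.choose_spec
      set g₁ := hz.choose
      have hinv : g₁⁻¹ ∈ G := inv_mem hg₁
      have hfixinv : ∀ i, g₁⁻¹ (z i) = z i := by
        intro i
        conv_lhs => rw [← hfix₁ i]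
        simp
      rw [e1]
      have := h _ hinv hfixinv x
      simpa [Equiv.Perm.inv_def] using this.symm
end
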